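/- arXiv:1903.09932 — 6 statements merged into one kernel-verified Lean document; each statement's English description precedes it below -/
import Mathlib

section
/- For a Leibniz algebra L, every centralizer C_L(x), x ∈ L, is a two-sided ideal of L if and only if L is a CL-algebra (i.e., both a left and a right CL-algebra). -/
/-- A (left) Leibniz algebra over a field `K`: a vector space with a bilinear bracket
satisfying `[x,[y,z]] = [[x,y],z] - [[x,z],y]`. -/
structure LeibnizAlgebra (K L : Type*) [Field K] [AddCommGroup L] [Module K L] where
  bracket : L →ₗ[K] L →ₗ[K] L
  leibniz : ∀ x y z : L,
    bracket x (bracket y z) = bracket (bracket x y) z - bracket (bracket x z) y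

variable {K L : Type*} [Field K] [AddCommGroup L] [Module K L]

/-- The centralizer `C_L(x) = {y : [x,y] = 0 = [y,x]}`. -/
def centralizer (A : LeibnizAlgebra K L) (x : L) : Set L :=
  {y | A.bracket x y = 0 ∧ A.bracket y x = 0}

/-- `L` is a CL-algebra: for all `a, x` and `y ∈ C_L(x)`,
`[[x,a],y] = 0`, `[[a,x],y] = 0`, `[y,[a,x]] = 0`. -/
def IsCL (A : LeibnizAlgebra K L) : Prop :=
  ∀ a x : L, ∀ y ∈ centralizer A x,
    A.bracket (A.bracket x a) y = 0 ∧ A.bracket (A.bracket a x) y = 0 ∧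
      A.bracket y (A.bracket a x) = 0

/-- `a` is a CL-element of `L`. -/
def IsCLElem (A : LeibnizAlgebra K L) (a : L) : Prop :=
  ∀ x : L, ∀ y ∈ centralizer A x,
    A.bracket (A.bracket x a) y = 0 ∧ A.bracket (A.bracket a x) y = 0 ∧
      A.bracket y (A.bracket a x) = 0

/-- Lower central series, indexed so that `lcs A n = L^(n+1)`:
`lcs A 0 = L` and `lcs A (n+1) = [lcs A n, L]`. -/
def lcs (A : LeibnizAlgebra K L) : ℕ → Submodule K L
  | 0 => ⊤
  | n + 1 => Submodule.span K {z | ∃ u ∈ lcs A n, ∃ v : L, z = A.bracket u v}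

/-! For `y ∈ C_L(x)`, each Leibniz identity in `x`, `a`, `y` involving `[x,y]` or `[y,x]` loses that
term, and what remains equates a bracket of `x` with `[a,y]` or `[y,a]` to a single CL expression. -/

section

variable {A : LeibnizAlgebra K L} {x y : L}

theorem bracket_left_mem_centralizer_iff (hy : y ∈ centralizer A x) (a : L) :
    A.bracket a y ∈ centralizer A x ↔
      A.bracket (A.bracket x a) y = 0 ∧ A.bracket (A.bracket a x) y = 0 := by
  have hx_ay : A.bracket x (A.bracket a y) = A.bracket (A.bracket x a) y := by
    simpa [hy.1] using A.leibniz x a y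
  have hay_x : A.bracket (A.bracket a y) x = A.bracket (A.bracket a x) y :=
    sub_eq_zero.mp (by simpa [hy.2] using (A.leibniz a y x).symm)
  simp only [centralizer, Set.mem_ofPred_eq, hx_ay, hay_x]

theorem bracket_right_mem_centralizer_iff (hy : y ∈ centralizer A x) (a : L) :
    A.bracket y a ∈ centralizer A x ↔
      A.bracket (A.bracket x a) y = 0 ∧ A.bracket y (A.bracket a x) = 0 := by
  have hx_ya : A.bracket x (A.bracket y a) = -A.bracket (A.bracket x a) y := by
    simpa [hy.1] using A.leibniz x y a
  have hya_x : A.bracket (A.bracket y a) x = A.bracket y (A.bracket a x) := by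
    simpa [hy.2] using (A.leibniz y a x).symm
  simp only [centralizer, Set.mem_ofPred_eq, hx_ya, hya_x, neg_eq_zero]

end

/-- every centralizer is a two-sided ideal iff `L` is a CL-algebra. -/
theorem centralizer_ideal_iff_CL (A : LeibnizAlgebra K L) :
    (∀ x a : L, ∀ y ∈ centralizer A x,
      A.bracket a y ∈ centralizer A x ∧ A.bracket y a ∈ centralizer A x) ↔ IsCL A := by
  constructor
  · intro h a x y hy
    obtain ⟨hleft, hright⟩ := h x a y hy
    rw [bracket_left_mem_centralizer_iff hy] at hleft
    rw [bracket_right_mem_centralizer_iff hy] at hright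
    exact ⟨hleft.1, hleft.2, hright.2⟩
  · intro h x a y hy
    obtain ⟨hxa, hax, hyax⟩ := h a x y hy
    exact ⟨(bracket_left_mem_centralizer_iff hy a).mpr ⟨hxa, hax⟩,
      (bracket_right_mem_centralizer_iff hy a).mpr ⟨hxa, hyax⟩⟩
end

section
/- The 2-dimensional algebra over a field F with basis {a,b} and the only nonzero product [a,a] = b is a Leibniz algebra, is not abelian, and is a CL-algebra. -/
variable {K L : Type*} [Field K] [AddCommGroup L] [Module K L]

/-- The basis vector `a` of the 2-dimensional algebra. -/
def ea (F : Type*) [Field F] : Fin 2 → F := Pi.single 0 1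

/-- The basis vector `b` of the 2-dimensional algebra. -/
def eb (F : Type*) [Field F] : Fin 2 → F := Pi.single 1 1

/-!
The bracket is `[x, y] = x₀ y₀ • b`, an instance of `[x, y] = f x • f y • v` for a linear form `f`
with `f v = 0`. Then every double bracket `[[x, y], z]` and `[x, [y, z]]` vanishes, which makes
both the Leibniz identity and the CL conditions hold trivially, while `[a, a] = b ≠ 0`.
-/

def dualSqBracket (f : Module.Dual K L) (v : L) : L →ₗ[K] L →ₗ[K] L :=
  f.smulRight (f.smulRight v)

@[simp]
lemma dualSqBracket_apply (f : Module.Dual K L) (v x y : L) :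
    dualSqBracket f v x y = (f x * f y) • v := by
  simp [dualSqBracket, mul_smul]

lemma dualSqBracket_bracket_left (f : Module.Dual K L) {v : L} (hv : f v = 0) (x y z : L) :
    dualSqBracket f v (dualSqBracket f v x y) z = 0 := by
  simp [hv]

lemma dualSqBracket_bracket_right (f : Module.Dual K L) {v : L} (hv : f v = 0) (x y z : L) :
    dualSqBracket f v x (dualSqBracket f v y z) = 0 := by
  simp [hv]

def LeibnizAlgebra.ofDual (f : Module.Dual K L) (v : L) (hv : f v = 0) : LeibnizAlgebra K L where
  bracket := dualSqBracket f v
  leibniz x y z := by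
    simp only [dualSqBracket_bracket_left f hv, dualSqBracket_bracket_right f hv, sub_zero]

lemma LeibnizAlgebra.bracket_bracket_right_eq_zero (A : LeibnizAlgebra K L)
    (h : ∀ x y z, A.bracket (A.bracket x y) z = 0) (x y z : L) :
    A.bracket x (A.bracket y z) = 0 := by
  rw [A.leibniz, h, h, sub_zero]

lemma isCL_of_bracket_bracket_eq_zero (A : LeibnizAlgebra K L)
    (h : ∀ x y z, A.bracket (A.bracket x y) z = 0) : IsCL A :=
  fun a x y _ => ⟨h x a y, h a x y, A.bracket_bracket_right_eq_zero h y a x⟩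

lemma eb_apply_zero (F : Type*) [Field F] : eb F 0 = 0 := by
  simp [eb]

/-- the 2-dimensional algebra over a field `F` with basis `{a, b}` and only
nonzero product `[a,a] = b` is a Leibniz algebra, is not abelian, and is a CL-algebra. -/
theorem two_dim_example_is_CL (F : Type*) [Field F] :
    ∃ A : LeibnizAlgebra F (Fin 2 → F),
      A.bracket (ea F) (ea F) = eb F ∧ A.bracket (ea F) (eb F) = 0 ∧
      A.bracket (eb F) (ea F) = 0 ∧ A.bracket (eb F) (eb F) = 0 ∧
      (¬ ∀ x y : Fin 2 → F, A.bracket x y = 0) ∧ IsCL A := by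
  let f : Module.Dual F (Fin 2 → F) := LinearMap.proj 0
  let A := LeibnizAlgebra.ofDual f (eb F) (eb_apply_zero F)
  have hbr : ∀ x y, A.bracket x y = (x 0 * y 0) • eb F :=
    dualSqBracket_apply f (eb F)
  have haa : A.bracket (ea F) (ea F) = eb F := by simp [hbr, ea]
  refine ⟨A, haa, by simp [hbr, eb_apply_zero], by simp [hbr, eb_apply_zero],
    by simp [hbr, eb_apply_zero], fun h => ?_, ?_⟩
  · exact Pi.single_ne_zero_iff.mpr one_ne_zero (haa ▸ h (ea F) (ea F))
  · exact isCL_of_bracket_bracket_eq_zero A (dualSqBracket_bracket_left _ (eb_apply_zero F))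
end

section
/- Let L be a Leibniz algebra, x ∈ L, y ∈ C_L(x), and let a ∈ L be a CL-element (i.e., for all x' ∈ L and y' ∈ C_L(x'): [[x',a],y']=0, [[a,x'],y']=0, [y',[a,x']]=0). Then [a,y] ∈ C_L(x) and [y,a] ∈ C_L(x). -/
variable {K L : Type*} [Field K] [AddCommGroup L] [Module K L]

namespace LeibnizAlgebra

variable (A : LeibnizAlgebra K L)

theorem bracket_bracket_eq_add (u v w : L) :
    A.bracket (A.bracket u v) w = A.bracket u (A.bracket v w) + A.bracket (A.bracket u w) v := by
  rw [A.leibniz]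
  abel

theorem bracket_mem_centralizer {x u v : L}
    (hxuv : A.bracket (A.bracket x u) v = 0) (hxvu : A.bracket (A.bracket x v) u = 0)
    (huvx : A.bracket u (A.bracket v x) = 0) (huxv : A.bracket (A.bracket u x) v = 0) :
    A.bracket u v ∈ centralizer A x :=
  ⟨by rw [A.leibniz, hxuv, hxvu, sub_zero],
    by rw [bracket_bracket_eq_add, huvx, huxv, add_zero]⟩

end LeibnizAlgebra

/-- if `y ∈ C_L(x)` and `a` is a CL-element, then `[a,y], [y,a] ∈ C_L(x)`. -/
theorem bracket_CL_elem_mem_centralizer (A : LeibnizAlgebra K L) (x y a : L)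
    (hy : y ∈ centralizer A x) (ha : IsCLElem A a) :
    A.bracket a y ∈ centralizer A x ∧ A.bracket y a ∈ centralizer A x := by
  obtain ⟨hxy, hyx⟩ := hy
  obtain ⟨hxay, haxy, hyax⟩ := ha x y ⟨hxy, hyx⟩
  have hxya : A.bracket (A.bracket x y) a = 0 := by rw [hxy, map_zero, LinearMap.zero_apply]
  have hyxa : A.bracket (A.bracket y x) a = 0 := by rw [hyx, map_zero, LinearMap.zero_apply]
  have hayx : A.bracket a (A.bracket y x) = 0 := by rw [hyx, map_zero]
  exact ⟨A.bracket_mem_centralizer hxay hxya hayx haxy,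
    A.bracket_mem_centralizer hxya hxay hyax hyxa⟩
end

section
/- In a Leibniz algebra L, the set S of all CL-elements is a Leibniz subalgebra of L: it is closed under subtraction, scalar multiplication, and the bracket. -/
variable {K L : Type*} [Field K] [AddCommGroup L] [Module K L]

/-! By the Leibniz identity, `[y, [u, v]] = -[y, [v, u]]`, so the third CL-condition for `a` also
kills `[y, [x, a]]`: a CL-element `a` turns every `y ∈ C_L(x)` into an element of `C_L([x, a])` and
of `C_L([a, x])`. Expanding `[x, [a, b]]` and `[[a, b], x]` by the Leibniz identity, each term is
then a CL-condition of `a` or `b` at one of these new pairs. -/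

namespace LeibnizAlgebra

variable (A : LeibnizAlgebra K L)

theorem bracket_bracket_swap (y u v : L) :
    A.bracket y (A.bracket u v) = -A.bracket y (A.bracket v u) := by
  rw [A.leibniz y u v, A.leibniz y v u]; abel

theorem bracket_bracket_left (a b x : L) :
    A.bracket (A.bracket a b) x = A.bracket a (A.bracket b x) + A.bracket (A.bracket a x) b := by
  rw [A.leibniz a b x]; abel

end LeibnizAlgebra

namespace IsCLElem

variable {A : LeibnizAlgebra K L} {a b : L}

theorem sub (ha : IsCLElem A a) (hb : IsCLElem A b) : IsCLElem A (a - b) := by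
  intro x y hy
  obtain ⟨ha₁, ha₂, ha₃⟩ := ha x y hy
  obtain ⟨hb₁, hb₂, hb₃⟩ := hb x y hy
  simp only [map_sub, LinearMap.sub_apply, ha₁, ha₂, ha₃, hb₁, hb₂, hb₃, sub_self, and_self]

theorem smul (c : K) (ha : IsCLElem A a) : IsCLElem A (c • a) := by
  intro x y hy
  obtain ⟨ha₁, ha₂, ha₃⟩ := ha x y hy
  simp only [map_smul, LinearMap.smul_apply, ha₁, ha₂, ha₃, smul_zero, and_self]

theorem mem_centralizer_bracket_left (ha : IsCLElem A a) {x y : L}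
    (hy : y ∈ centralizer A x) : y ∈ centralizer A (A.bracket x a) := by
  obtain ⟨h₁, -, h₃⟩ := ha x y hy
  exact ⟨h₁, by rw [A.bracket_bracket_swap y x a, h₃, neg_zero]⟩

theorem mem_centralizer_bracket_right (ha : IsCLElem A a) {x y : L}
    (hy : y ∈ centralizer A x) : y ∈ centralizer A (A.bracket a x) :=
  (ha x y hy).2

theorem bracket (ha : IsCLElem A a) (hb : IsCLElem A b) : IsCLElem A (A.bracket a b) := by
  intro x y hy
  have hyxa := ha.mem_centralizer_bracket_left hy
  have hyax := ha.mem_centralizer_bracket_right hy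
  have hyxb := hb.mem_centralizer_bracket_left hy
  have hybx := hb.mem_centralizer_bracket_right hy
  refine ⟨?_, ?_, ?_⟩
  · rw [A.leibniz x a b, map_sub, LinearMap.sub_apply, (hb _ y hyxa).1, (ha _ y hyxb).1,
      sub_zero]
  · rw [A.bracket_bracket_left a b x, map_add, LinearMap.add_apply, (ha _ y hybx).2.1,
      (hb _ y hyax).1, add_zero]
  · rw [A.bracket_bracket_left a b x, map_add, (ha _ y hybx).2.2,
      A.bracket_bracket_swap y (A.bracket a x) b, (hb _ y hyax).2.2, neg_zero, add_zero]

end IsCLElem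

/-- the set of CL-elements is a Leibniz subalgebra: closed under
subtraction, scalar multiplication, and the bracket. -/
theorem CL_elements_subalgebra (A : LeibnizAlgebra K L) :
    (∀ a b : L, IsCLElem A a → IsCLElem A b → IsCLElem A (a - b)) ∧
    (∀ (c : K) (a : L), IsCLElem A a → IsCLElem A (c • a)) ∧
    (∀ a b : L, IsCLElem A a → IsCLElem A b → IsCLElem A (A.bracket a b)) :=
  ⟨fun _ _ ha hb => ha.sub hb, fun c _ ha => ha.smul c, fun _ _ ha hb => ha.bracket hb⟩
end

section
/- There exists a finite-dimensional CL-algebra which is not nilpotent: the 3-dimensional complex algebra L with basis e1,e2,e3 and nonzero products [e3,e3]=e1, [e3,e2]=e2, [e2,e3]=-e2 is a Leibniz algebra, is a CL-algebra, and L^k ⊇ span(e2) ≠ 0 for all k, so L is not nilpotent. -/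
variable {K L : Type*} [Field K] [AddCommGroup L] [Module K L]

/-- Standard basis vectors of `ℂ³`, with `e 0, e 1, e 2` playing the roles of `e₁, e₂, e₃`. -/
def e (i : Fin 3) : Fin 3 → ℂ := Pi.single i 1

/-!
The bracket lands in `D = span(e₁, e₂)`, which is abelian, and `e₁` spans the two-sided
annihilator. If `y` centralizes `x`, then either `y ∈ D`, or `y` has an `e₃`-component and this
forces `x ∈ span(e₁)`; in both cases the three CL-brackets vanish. Non-nilpotency comes from
`[e₂, -e₃] = e₂`, which keeps `e₂` in every term of the lower central series.
-/

lemma isCL_of_centralizer_dichotomy (A : LeibnizAlgebra K L) (D : Set L)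
    (hbracket : ∀ a b, A.bracket a b ∈ D) (habelian : ∀ u ∈ D, ∀ v ∈ D, A.bracket u v = 0)
    (hdich : ∀ x, ∀ y ∈ centralizer A x, y ∈ D ∨ ∀ a, A.bracket x a = 0 ∧ A.bracket a x = 0) :
    IsCL A := by
  intro a x y hy
  rcases hdich x y hy with hyD | hx
  · exact ⟨habelian _ (hbracket x a) y hyD, habelian _ (hbracket a x) y hyD,
      habelian y hyD _ (hbracket a x)⟩
  · simp [(hx a).1, (hx a).2]

lemma mem_lcs_of_bracket_eq_self (A : LeibnizAlgebra K L) {v w : L}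
    (h : A.bracket v w = v) (k : ℕ) : v ∈ lcs A k := by
  induction k with
  | zero => exact Submodule.mem_top
  | succ k ih => exact Submodule.subset_span ⟨v, ih, w, h.symm⟩

lemma lcs_ne_bot_of_bracket_eq_self (A : LeibnizAlgebra K L) {v w : L}
    (h : A.bracket v w = v) (hv : v ≠ 0) (k : ℕ) : lcs A k ≠ ⊥ :=
  fun hk => hv <| (Submodule.mem_bot K).mp (hk ▸ mem_lcs_of_bracket_eq_self A h k)

namespace CLExample

noncomputable def bracket : (Fin 3 → ℂ) →ₗ[ℂ] (Fin 3 → ℂ) →ₗ[ℂ] (Fin 3 → ℂ) :=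
  LinearMap.mk₂ ℂ (fun x y => ![x 2 * y 2, x 2 * y 1 - x 1 * y 2, 0])
    (by intros; ext i; fin_cases i <;> simp <;> ring)
    (by intros; ext i; fin_cases i <;> simp <;> ring)
    (by intros; ext i; fin_cases i <;> simp <;> ring)
    (by intros; ext i; fin_cases i <;> simp <;> ring)

@[simp] lemma bracket_apply_zero (x y : Fin 3 → ℂ) : bracket x y 0 = x 2 * y 2 := rfl
@[simp] lemma bracket_apply_one (x y : Fin 3 → ℂ) :
    bracket x y 1 = x 2 * y 1 - x 1 * y 2 := rfl
@[simp] lemma bracket_apply_two (x y : Fin 3 → ℂ) : bracket x y 2 = 0 := rfl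

noncomputable def algebra : LeibnizAlgebra ℂ (Fin 3 → ℂ) where
  bracket := bracket
  leibniz x y z := by ext i; fin_cases i <;> simp; ring

@[simp] lemma algebra_bracket : algebra.bracket = bracket := rfl

lemma bracket_eq_zero_of_apply_two {u : Fin 3 → ℂ} (hu : u 2 = 0) {v : Fin 3 → ℂ}
    (hv : v 2 = 0) : bracket u v = 0 := by
  ext i; fin_cases i <;> simp [hu, hv]

lemma mem_centralizer_dichotomy (x y : Fin 3 → ℂ) (hy : y ∈ centralizer algebra x) :
    y 2 = 0 ∨ ∀ a, bracket x a = 0 ∧ bracket a x = 0 := by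
  refine or_iff_not_imp_left.mpr fun hy2 a => ?_
  have hx2 : x 2 = 0 := by simpa [hy2] using congrFun hy.1 0
  have hx1 : x 1 = 0 := by simpa [hx2, hy2] using congrFun hy.1 1
  constructor <;> ext i <;> fin_cases i <;> simp [hx1, hx2]

lemma isCL_algebra : IsCL algebra :=
  isCL_of_centralizer_dichotomy algebra {v | v 2 = 0} bracket_apply_two
    (fun _ hu _ hv => bracket_eq_zero_of_apply_two hu hv) mem_centralizer_dichotomy

lemma bracket_e_one_neg_e_two : bracket (e 1) (-e 2) = e 1 := by
  ext i; fin_cases i <;> simp [e]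

end CLExample

/-- the 3-dimensional complex algebra with nonzero products
`[e₃,e₃]=e₁`, `[e₃,e₂]=e₂`, `[e₂,e₃]=-e₂` is a Leibniz algebra which is a CL-algebra
but not nilpotent: every term `L^k = lcs (k-1)` contains `span(e₂) ≠ 0`. -/
theorem CL_not_nilpotent :
    ∃ A : LeibnizAlgebra ℂ (Fin 3 → ℂ),
      A.bracket (e 2) (e 2) = e 0 ∧ A.bracket (e 2) (e 1) = e 1 ∧
      A.bracket (e 1) (e 2) = -(e 1) ∧
      A.bracket (e 0) (e 0) = 0 ∧ A.bracket (e 0) (e 1) = 0 ∧ A.bracket (e 0) (e 2) = 0 ∧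
      A.bracket (e 1) (e 0) = 0 ∧ A.bracket (e 1) (e 1) = 0 ∧ A.bracket (e 2) (e 0) = 0 ∧
      IsCL A ∧
      (∀ k : ℕ, Submodule.span ℂ {e 1} ≤ lcs A k) ∧
      Submodule.span ℂ {e 1} ≠ (⊥ : Submodule ℂ (Fin 3 → ℂ)) ∧
      (∀ n : ℕ, lcs A n ≠ ⊥) := by
  have he₂ : e 1 ≠ 0 := Pi.single_ne_zero_iff.mpr one_ne_zero
  have hfixed := CLExample.bracket_e_one_neg_e_two
  refine ⟨CLExample.algebra, ?_, ?_, ?_, ?_, ?_, ?_, ?_, ?_, ?_, CLExample.isCL_algebra,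
    fun k => (Submodule.span_singleton_le_iff_mem _ _).mpr (mem_lcs_of_bracket_eq_self _ hfixed k),
    Submodule.span_singleton_eq_bot.not.mpr he₂, lcs_ne_bot_of_bracket_eq_self _ hfixed he₂⟩
  all_goals ext i; fin_cases i <;> simp [e]
end

section
/- If (L, d) is a Lie algebra with a derivation d satisfying d∘d = 0, then the derived bracket [x,y]_d := [x, d y] makes L a Leibniz algebra, i.e., [x,[y,z]_d]_d = [[x,y]_d, z]_d - [[x,z]_d, y]_d for all x,y,z. -/
theorem lie_lie_eq_lie_lie_sub_lie_lie {L : Type*} [LieRing L] (x a b : L) :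
    ⁅x, ⁅a, b⁆⁆ = ⁅⁅x, a⁆, b⁆ - ⁅⁅x, b⁆, a⁆ := by
  rw [leibniz_lie, ← lie_skew a, sub_eq_add_neg]

theorem map_lie_map_of_square_zero {L : Type*} [LieRing L] (d : L → L)
    (hder : ∀ x y : L, d ⁅x, y⁆ = ⁅d x, y⁆ + ⁅x, d y⁆) (hd2 : ∀ x : L, d (d x) = 0) (y z : L) :
    d ⁅y, d z⁆ = ⁅d y, d z⁆ := by
  rw [hder, hd2, lie_zero, add_zero]

/-- if `(L, d)` is a Lie algebra with a derivation `d` satisfying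
`d ∘ d = 0`, then the derived bracket `[x,y]_d := ⁅x, d y⁆` satisfies the Leibniz
identity `[x,[y,z]_d]_d = [[x,y]_d, z]_d - [[x,z]_d, y]_d`. -/
theorem derived_bracket_leibniz {K L : Type*} [Field K] [LieRing L] [LieAlgebra K L]
    (d : L →ₗ[K] L)
    (hder : ∀ x y : L, d ⁅x, y⁆ = ⁅d x, y⁆ + ⁅x, d y⁆)
    (hd2 : ∀ x : L, d (d x) = 0) :
    ∀ x y z : L, ⁅x, d ⁅y, d z⁆⁆ = ⁅⁅x, d y⁆, d z⁆ - ⁅⁅x, d z⁆, d y⁆ := by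
  intro x y z
  rw [map_lie_map_of_square_zero d hder hd2]
  exact lie_lie_eq_lie_lie_sub_lie_lie x (d y) (d z)
end
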